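/- arXiv:2310.20681 — 3 statements merged into one kernel-verified Lean document; each statement's English description precedes it below -/
import Mathlib

section
/- Mirsky's theorem (one direction, diagonal construction): given complex numbers λ₁,…,λₙ and a₁,…,aₙ with Σaᵢ = Σλᵢ, there exists an n×n complex matrix with eigenvalues λ₁,…,λₙ (counted with multiplicity) and diagonal entries a₁,…,aₙ. -/
/-!
With `p = ∏ᵢ (X - λᵢ)`, multiplication by the root on `K[X] ⧸ (p)` has characteristic
polynomial `p` in every basis. In the Newton basis `Pⱼ = ∏_{k < j} (X - aₖ)`, `j < n`, one has
`X * Pⱼ = Pⱼ₊₁ + aⱼ * Pⱼ`, so the diagonal of that matrix starts with `a₀, …, aₙ₋₂`; its last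
entry is then forced to be `aₙ₋₁` by the trace condition.
-/

open Polynomial Module Algebra AdjoinRoot

theorem Fintype.apply_eq_of_sum_eq_of_forall_ne {ι M : Type*} [Fintype ι] [DecidableEq ι]
    [AddCommGroup M] {f g : ι → M} (h : ∑ i, f i = ∑ i, g i) (i : ι)
    (hne : ∀ j ≠ i, f j = g j) : f i = g i := by
  rw [← Finset.add_sum_erase _ f (Finset.mem_univ i),
    ← Finset.add_sum_erase _ g (Finset.mem_univ i),
    Finset.sum_congr rfl fun j hj => hne j (Finset.ne_of_mem_erase hj)] at h
  exact add_right_cancel h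

namespace Polynomial

variable {K : Type*} [Field K]

noncomputable def newtonSequence (a : ℕ → K) : Sequence K where
  elems' j := ∏ k ∈ Finset.range j, (X - C (a k))
  degree_eq' j := by simp [degree_prod]

lemma newtonSequence_apply (a : ℕ → K) (j : ℕ) :
    newtonSequence a j = ∏ k ∈ Finset.range j, (X - C (a k)) := rfl

lemma X_mul_newtonSequence (a : ℕ → K) (j : ℕ) :
    X * newtonSequence a j = newtonSequence a (j + 1) + C (a j) * newtonSequence a j := by
  rw [newtonSequence_apply, newtonSequence_apply, Finset.prod_range_succ]
  ring

variable {p : K[X]}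

lemma Sequence.top_le_span_adjoinRoot_mk (S : Sequence K) (hp : p.Monic) {n : ℕ}
    (hpn : p.natDegree = n) :
    ⊤ ≤ Submodule.span K (Set.range fun i : Fin n => AdjoinRoot.mk p (S i)) := by
  rintro x -
  obtain ⟨q, rfl⟩ := AdjoinRoot.mk_surjective x
  rw [← mk_leftInverse hp (AdjoinRoot.mk p q), modByMonicHom_mk]
  have hq : q %ₘ p ∈ Submodule.span K (S '' Set.Iio n) := by
    rw [S.span_degreeLT fun i _ => (leadingCoeff_ne_zero.mpr (S.ne_zero i)).isUnit,
      mem_degreeLT, ← hpn, ← degree_eq_natDegree hp.ne_zero]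
    exact degree_modByMonic_lt q hp
  refine Submodule.span_mono ?_
    (Submodule.apply_mem_span_image_of_mem_span (mkₐ p).toLinearMap hq)
  rintro _ ⟨_, ⟨j, hj, rfl⟩, rfl⟩
  exact ⟨⟨j, hj⟩, rfl⟩

noncomputable def Sequence.adjoinRootBasis (S : Sequence K) (hp : p.Monic) {n : ℕ}
    (hpn : p.natDegree = n) : Basis (Fin n) K (AdjoinRoot p) :=
  basisOfTopLeSpanOfCardEqFinrank _ (S.top_le_span_adjoinRoot_mk hp hpn)
    (by rw [Fintype.card_fin, (powerBasis hp.ne_zero).finrank, powerBasis_dim, hpn])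

@[simp]
lemma Sequence.adjoinRootBasis_apply (S : Sequence K) (hp : p.Monic) {n : ℕ}
    (hpn : p.natDegree = n) (i : Fin n) :
    S.adjoinRootBasis hp hpn i = AdjoinRoot.mk p (S i) := by
  simp [Sequence.adjoinRootBasis]

end Polynomial

namespace AdjoinRoot

variable {K : Type*} [Field K] {p : K[X]}

theorem charpoly_leftMulMatrix_root {ι : Type*} [Fintype ι] [DecidableEq ι] (hp : p.Monic)
    (b : Basis ι K (AdjoinRoot p)) : (leftMulMatrix b (root p)).charpoly = p := by
  have := (powerBasis hp.ne_zero).finite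
  rw [leftMulMatrix_apply, LinearMap.charpoly_toMatrix,
    ← LinearMap.charpoly_toMatrix _ (powerBasis hp.ne_zero).basis, ← leftMulMatrix_apply,
    ← powerBasis_gen hp.ne_zero, charpoly_leftMulMatrix, minpoly_powerBasis_gen_of_monic hp]

theorem leftMulMatrix_root_newtonSequence_apply_self (hp : p.Monic) {n : ℕ}
    (hpn : p.natDegree = n) (a : ℕ → K) {i : Fin n} (hi : (i : ℕ) + 1 < n) :
    leftMulMatrix ((newtonSequence a).adjoinRootBasis hp hpn) (root p) i i = a i := by
  set b := (newtonSequence a).adjoinRootBasis hp hpn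
  have hmul : root p * b i = b ⟨i + 1, hi⟩ + a i • b i := by
    simp only [b, Sequence.adjoinRootBasis_apply]
    rw [← mk_X, ← map_mul, X_mul_newtonSequence, map_add, map_mul, mk_C, Algebra.smul_def,
      algebraMap_eq]
  rw [leftMulMatrix_eq_repr_mul, hmul, map_add, map_smul, b.repr_self, b.repr_self]
  simp [Fin.ext_iff]

end AdjoinRoot

theorem Matrix.exists_charpoly_eq_of_sum_diag_eq {K : Type*} [Field K] {p : K[X]} (hp : p.Monic)
    {n : ℕ} (hpn : p.natDegree = n) (a : Fin n → K) (ha : ∑ i, a i = -p.nextCoeff) :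
    ∃ A : Matrix (Fin n) (Fin n) K, A.charpoly = p ∧ ∀ i, A i i = a i := by
  set a' : ℕ → K := Function.extend Fin.val a 0
  have ha' (i : Fin n) : a' i = a i := Fin.val_injective.extend_apply a 0 i
  set A := leftMulMatrix ((newtonSequence a').adjoinRootBasis hp hpn) (root p)
  have hA : A.charpoly = p := charpoly_leftMulMatrix_root hp _
  have hdiag {i : Fin n} (hi : (i : ℕ) + 1 < n) : A i i = a i :=
    (leftMulMatrix_root_newtonSequence_apply_self hp hpn a' hi).trans (ha' i)
  refine ⟨A, hA, fun i => ?_⟩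
  by_cases hi : (i : ℕ) + 1 < n
  · exact hdiag hi
  refine Fintype.apply_eq_of_sum_eq_of_forall_ne (f := fun i => A i i) ?_ i fun j hj => hdiag ?_
  · rw [ha, ← hA, ← Matrix.trace_eq_neg_charpoly_nextCoeff, Matrix.trace]
    rfl
  · have := Fin.val_injective.ne hj
    omega

theorem mirsky_existence_general (n : ℕ) (lam a : Fin n → ℂ)
    (h : ∑ i, a i = ∑ i, lam i) :
    ∃ A : Matrix (Fin n) (Fin n) ℂ,
      A.charpoly = ∏ i, (X - C (lam i)) ∧ ∀ i, A i i = a i :=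
  Matrix.exists_charpoly_eq_of_sum_diag_eq (monic_prod_of_monic _ _ fun i _ => monic_X_sub_C _)
    (by simp) a (by rw [h, prod_X_sub_C_nextCoeff, neg_neg])

theorem mirsky_existence (n : ℕ) (hn : 1 ≤ n) (lam a : Fin n → ℂ)
    (h : ∑ i, a i = ∑ i, lam i) :
    ∃ A : Matrix (Fin n) (Fin n) ℂ,
      A.charpoly = ∏ i, (X - C (lam i)) ∧ ∀ i, A i i = a i :=
  mirsky_existence_general n lam a h
end

section
/- For the μ-τ reflection symmetric mixing matrix in the standard PMNS parametrization, the condition |U_{μi}| = |U_{τi}| for all i = 1,2,3 with s₁₃ ≠ 0 and all angles in (0,π/2) forces θ₂₃ = π/4 and cos δ_CP = 0. -/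
/-! With `θ₂₃ = π/4` forced by the third column, the two entries of the first column have the
same real part up to sign and the same phase term, so their squared moduli differ by
`4 s₁₂ c₁₂ c₂₃² s₁₃ cos δ`; all factors but `cos δ` are positive. -/

open Complex

theorem norm_sq_ofReal_sub_ofReal_mul_exp (a b δ : ℝ) :
    ‖(a : ℂ) - b * exp (δ * I)‖ ^ 2 = a ^ 2 + b ^ 2 - 2 * a * b * Real.cos δ := by
  rw [Complex.sq_norm, normSq_apply]
  simp only [sub_re, sub_im, mul_re, mul_im, ofReal_re, ofReal_im, exp_ofReal_mul_I_re,
    exp_ofReal_mul_I_im]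
  linear_combination b ^ 2 * Real.sin_sq_add_cos_sq δ

theorem norm_neg_sub_mul_exp_eq_norm_sub_mul_exp_iff (a b δ : ℝ) :
    ‖-(a : ℂ) - b * exp (δ * I)‖ = ‖(a : ℂ) - b * exp (δ * I)‖ ↔ a * b * Real.cos δ = 0 := by
  have hneg : -(a : ℂ) - b * exp (δ * I) = -((a : ℂ) - ((-b : ℝ) : ℂ) * exp (δ * I)) := by
    push_cast; ring
  rw [hneg, norm_neg, ← sq_eq_sq₀ (norm_nonneg _) (norm_nonneg _),
    norm_sq_ofReal_sub_ofReal_mul_exp, norm_sq_ofReal_sub_ofReal_mul_exp]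
  constructor <;> intro h <;> linarith

theorem mutau_reflection_maximal_general (θ12 θ13 θ23 δ : ℝ)
    (hs12 : 0 < Real.sin θ12) (hc12 : 0 < Real.cos θ12)
    (hs13 : 0 < Real.sin θ13) (hc13 : 0 < Real.cos θ13)
    (hs23 : 0 < Real.sin θ23) (hc23 : 0 < Real.cos θ23)
    (h1 : ‖-(Real.sin θ12 * Real.cos θ23 : ℝ) -
            (Real.cos θ12 * Real.sin θ23 * Real.sin θ13 : ℝ) * Complex.exp ((δ : ℂ) * Complex.I)‖ =
          ‖(Real.sin θ12 * Real.sin θ23 : ℝ) -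
            (Real.cos θ12 * Real.cos θ23 * Real.sin θ13 : ℝ) * Complex.exp ((δ : ℂ) * Complex.I)‖)
    (h3 : ‖((Real.sin θ23 * Real.cos θ13 : ℝ) : ℂ)‖ =
          ‖((Real.cos θ23 * Real.cos θ13 : ℝ) : ℂ)‖) :
    Real.sin θ23 = Real.cos θ23 ∧ Real.cos δ = 0 := by
  have h23 : Real.sin θ23 = Real.cos θ23 := by
    rw [norm_real, norm_real, Real.norm_of_nonneg (by positivity),
      Real.norm_of_nonneg (by positivity)] at h3
    exact mul_right_cancel₀ hc13.ne' h3
  refine ⟨h23, ?_⟩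
  rw [h23, norm_neg_sub_mul_exp_eq_norm_sub_mul_exp_iff] at h1
  have hcoeff : Real.sin θ12 * Real.cos θ23 * (Real.cos θ12 * Real.cos θ23 * Real.sin θ13) ≠ 0 := by
    positivity
  exact (mul_eq_zero.mp h1).resolve_left hcoeff

theorem mutau_reflection_maximal (θ12 θ13 θ23 δ : ℝ)
    (hs12 : 0 < Real.sin θ12) (hc12 : 0 < Real.cos θ12)
    (hs13 : 0 < Real.sin θ13) (hc13 : 0 < Real.cos θ13)
    (hs23 : 0 < Real.sin θ23) (hc23 : 0 < Real.cos θ23)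
    (h1 : ‖-(Real.sin θ12 * Real.cos θ23 : ℝ) -
            (Real.cos θ12 * Real.sin θ23 * Real.sin θ13 : ℝ) * Complex.exp ((δ : ℂ) * Complex.I)‖ =
          ‖(Real.sin θ12 * Real.sin θ23 : ℝ) -
            (Real.cos θ12 * Real.cos θ23 * Real.sin θ13 : ℝ) * Complex.exp ((δ : ℂ) * Complex.I)‖)
    (h2 : ‖(Real.cos θ12 * Real.cos θ23 : ℝ) -
            (Real.sin θ12 * Real.sin θ23 * Real.sin θ13 : ℝ) * Complex.exp ((δ : ℂ) * Complex.I)‖ =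
          ‖-(Real.cos θ12 * Real.sin θ23 : ℝ) -
            (Real.sin θ12 * Real.cos θ23 * Real.sin θ13 : ℝ) * Complex.exp ((δ : ℂ) * Complex.I)‖)
    (h3 : ‖((Real.sin θ23 * Real.cos θ13 : ℝ) : ℂ)‖ =
          ‖((Real.cos θ23 * Real.cos θ13 : ℝ) : ℂ)‖) :
    Real.sin θ23 = Real.cos θ23 ∧ Real.cos δ = 0 :=
  mutau_reflection_maximal_general θ12 θ13 θ23 δ hs12 hc12 hs13 hc13 hs23 hc23 h1 h3
end

section
/- For the TM₁ mixing matrix U_TM₁ = U_TBM · R₂₃(θ,γ), the Jarlskog invariant J = Im(U₁₁ U₂₂ U₁₂* U₂₁*) equals -(1/(6√6))·sin 2θ·sin γ. -/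
open Matrix

noncomputable def U_TBM : Matrix (Fin 3) (Fin 3) ℂ :=
  !![(Real.sqrt (2/3) : ℂ), (1/Real.sqrt 3 : ℝ), 0;
     (-(1/Real.sqrt 6) : ℝ), (1/Real.sqrt 3 : ℝ), (-(1/Real.sqrt 2) : ℝ);
     (-(1/Real.sqrt 6) : ℝ), (1/Real.sqrt 3 : ℝ), (1/Real.sqrt 2 : ℝ)]

noncomputable def R23 (θ γ : ℝ) : Matrix (Fin 3) (Fin 3) ℂ :=
  !![1, 0, 0;
     0, (Real.cos θ : ℂ), (Real.sin θ : ℂ) * Complex.exp (-(γ : ℂ) * Complex.I);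
     0, -(Real.sin θ : ℂ) * Complex.exp ((γ : ℂ) * Complex.I), (Real.cos θ : ℂ)]

/-! The entries `U₁₁`, `U₁₂`, `U₂₁` are real, so `J = U₁₁ U₁₂ U₂₁ · Im U₂₂`, and the phase
enters only through `Im U₂₂ = sin θ sin γ / √2`. -/

open ComplexConjugate

lemma Complex.im_ofReal_mul_mul_conj_ofReal_mul_conj_ofReal (a b c : ℝ) (z : ℂ) :
    ((a : ℂ) * z * conj (b : ℂ) * conj (c : ℂ)).im = a * b * c * z.im := by
  simp only [Complex.conj_ofReal, Complex.im_mul_ofReal, Complex.im_ofReal_mul]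
  ring

lemma Real.sqrt_two_div_three_div_sqrt_three_mul_sqrt_two :
    √(2 / 3) / (√3 * √2) = 1 / 3 := by
  rw [Real.sqrt_div (by norm_num)]
  field_simp
  rw [Real.sq_sqrt (by norm_num)]

section TM1

variable (θ γ : ℝ)

lemma U_TBM_mul_R23_apply_zero_zero : (U_TBM * R23 θ γ) 0 0 = ((√(2 / 3) : ℝ) : ℂ) := by
  simp [U_TBM, R23, mul_apply, Fin.sum_univ_three]

lemma U_TBM_mul_R23_apply_zero_one : (U_TBM * R23 θ γ) 0 1 = ((Real.cos θ / √3 : ℝ) : ℂ) := by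
  simp [U_TBM, R23, mul_apply, Fin.sum_univ_three, div_eq_inv_mul]

lemma U_TBM_mul_R23_apply_one_zero : (U_TBM * R23 θ γ) 1 0 = ((-(1 / √6) : ℝ) : ℂ) := by
  simp [U_TBM, R23, mul_apply, Fin.sum_univ_three]

lemma U_TBM_mul_R23_apply_one_one :
    (U_TBM * R23 θ γ) 1 1 =
      ((Real.cos θ / √3 : ℝ) : ℂ) + ((Real.sin θ / √2 : ℝ) : ℂ) * Complex.exp (γ * Complex.I) := by
  simp [U_TBM, R23, mul_apply, Fin.sum_univ_three]
  ring

lemma U_TBM_mul_R23_apply_one_one_im :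
    ((U_TBM * R23 θ γ) 1 1).im = Real.sin θ / √2 * Real.sin γ := by
  rw [U_TBM_mul_R23_apply_one_one, Complex.add_im, Complex.ofReal_im, Complex.im_ofReal_mul,
    Complex.exp_ofReal_mul_I_im, zero_add]

end TM1

theorem TM1_jarlskog (θ γ : ℝ) :
    ((U_TBM * R23 θ γ) 0 0 * (U_TBM * R23 θ γ) 1 1 *
      starRingEnd ℂ ((U_TBM * R23 θ γ) 0 1) *
      starRingEnd ℂ ((U_TBM * R23 θ γ) 1 0)).im =
    -(Real.sin (2 * θ) * Real.sin γ) / (6 * Real.sqrt 6) := by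
  rw [U_TBM_mul_R23_apply_zero_zero, U_TBM_mul_R23_apply_zero_one, U_TBM_mul_R23_apply_one_zero,
    Complex.im_ofReal_mul_mul_conj_ofReal_mul_conj_ofReal, U_TBM_mul_R23_apply_one_one_im,
    Real.sin_two_mul]
  calc _ = -(√(2 / 3) / (√3 * √2)) * (2 * Real.sin θ * Real.cos θ * Real.sin γ) / (2 * √6) := by
          ring
    _ = _ := by
          rw [Real.sqrt_two_div_three_div_sqrt_three_mul_sqrt_two]
          ring
end
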